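/- arXiv:2309.13236 — 6 statements merged into one kernel-verified Lean document; each statement's English description precedes it below -/
import Mathlib

section
/- Let d ≤ n be positive integers and let P be a d×n real matrix of rank d over ℝ whose n columns p₁,…,pₙ (vectors in ℝ^d) are linearly independent over ℚ. Then the set {P^T x mod ℤ^n : x ∈ ℝ^d} is dense in the torus 𝕋^n; equivalently, the map ℝ^d → 𝕋^n sending x to the class of P^T x has dense range. -/
/-!
If the image is not dense, the preimage `H ⊆ ℝⁿ` of its closure is a proper closed subgroup
containing `ℤⁿ` and the subspace `V = Pᵀ ℝᵈ`. Modulo the largest subspace `W ⊇ V` contained in `H`,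
the group `H` projects to a discrete subgroup of a complement of `W`, and a nonzero linear form
integral on that subgroup (a coordinate of a `ℤ`-basis if it spans, otherwise one vanishing on it)
yields a nonzero linear form that is integral on `H` and vanishes on `W`. Its values
`zⱼ ∈ ℤ` on the standard basis satisfy `∑ⱼ zⱼ pⱼ = 0`, contradicting the `ℚ`-independence of the
columns `pⱼ`.
-/

open Filter Topology Submodule Matrix

namespace AddSubgroup

variable {E : Type*} [NormedAddCommGroup E] [NormedSpace ℝ E]

def linealitySpace (H : AddSubgroup E) : Submodule ℝ E where
  carrier := {x | ∀ t : ℝ, t • x ∈ H}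
  add_mem' hx hy t := by
    rw [smul_add]
    exact H.add_mem (hx t) (hy t)
  zero_mem' t := by
    rw [smul_zero]
    exact H.zero_mem
  smul_mem' c x hx t := by
    rw [smul_smul]
    exact hx (t * c)

variable {H : AddSubgroup E}

theorem mem_of_mem_linealitySpace {x : E} (hx : x ∈ H.linealitySpace) : x ∈ H := by
  simpa using hx 1

theorem smul_mem_of_tendsto_normalize (hH : IsClosed (H : Set E)) {h : ℕ → E}
    (hmem : ∀ k, h k ∈ H) (hne : ∀ k, h k ≠ 0) (hlim : Tendsto (‖h ·‖) atTop (𝓝 0)) {u : E}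
    (hu : Tendsto (fun k => ‖h k‖⁻¹ • h k) atTop (𝓝 u)) (t : ℝ) : t • u ∈ H := by
  -- `c k • ‖h k‖⁻¹ • h k = ⌊t / ‖h k‖⌋ • h k ∈ H`, and `|c k - t| ≤ ‖h k‖`
  set c : ℕ → ℝ := fun k => t - ‖h k‖ * Int.fract (t / ‖h k‖)
  have hc : Tendsto c atTop (𝓝 t) := by
    have hfract : Tendsto (fun k => ‖h k‖ * Int.fract (t / ‖h k‖)) atTop (𝓝 0) :=
      squeeze_zero (fun k => mul_nonneg (norm_nonneg _) (Int.fract_nonneg _))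
        (fun k => mul_le_of_le_one_right (norm_nonneg _) (Int.fract_lt_one _).le) hlim
    simpa using tendsto_const_nhds.sub hfract
  have hcH : ∀ k, c k • ‖h k‖⁻¹ • h k ∈ H := by
    intro k
    have hk : ‖h k‖ ≠ 0 := norm_ne_zero_iff.2 (hne k)
    have : c k • ‖h k‖⁻¹ • h k = ⌊t / ‖h k‖⌋ • h k := by
      rw [smul_smul, ← Int.cast_smul_eq_zsmul ℝ]
      congr 1
      simp only [c, ← Int.self_sub_floor]
      field_simp
      ring
    exact this ▸ H.zsmul_mem (hmem k) _
  exact hH.mem_of_tendsto (hc.smul hu) (Eventually.of_forall hcH)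

theorem discreteTopology_of_linealitySpace_eq_bot [FiniteDimensional ℝ E]
    (hH : IsClosed (H : Set E)) (hW : H.linealitySpace = ⊥) : DiscreteTopology H := by
  by_contra hnd
  have hsmall : ∀ k : ℕ, ∃ x ∈ H, x ≠ 0 ∧ ‖x‖ < 1 / (k + 1) := by
    intro k
    by_contra! hk
    exact hnd (.of_forall_le_norm (r := 1 / (k + 1)) (by positivity)
      fun x hx => hk x x.2 (by simpa using hx))
  choose h hmem hne hlt using hsmall
  obtain ⟨u, hu, φ, hφ, hconv⟩ := (isCompact_sphere (0 : E) 1).tendsto_subseq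
    (x := fun k => ‖h k‖⁻¹ • h k) fun k => by simp [norm_smul, hne k]
  have hlim : Tendsto (‖h <| φ ·‖) atTop (𝓝 0) := by
    refine squeeze_zero (fun _ => norm_nonneg _) (fun k => (hlt (φ k)).le.trans ?_)
      tendsto_one_div_add_atTop_nhds_zero_nat
    gcongr
    exact hφ.le_apply
  have hu0 : u ∈ H.linealitySpace :=
    smul_mem_of_tendsto_normalize hH (fun k => hmem (φ k)) (fun k => hne (φ k)) hlim hconv
  rw [hW, Submodule.mem_bot] at hu0
  simp [hu0] at hu

theorem exists_ne_zero_intValued_of_discreteTopology [FiniteDimensional ℝ E] [Nontrivial E]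
    (L : AddSubgroup E) [DiscreteTopology L] :
    ∃ f : E →ₗ[ℝ] ℝ, f ≠ 0 ∧ ∀ x ∈ L, ∃ z : ℤ, f x = z := by
  by_cases hspan : span ℝ (L : Set E) = ⊤
  · let L' := L.toIntSubmodule
    have : DiscreteTopology L' := ‹DiscreteTopology L›
    have : IsZLattice ℝ L' := ⟨hspan⟩
    let B := (Module.Free.chooseBasis ℤ L').ofZLatticeBasis ℝ L'
    obtain ⟨i⟩ := B.index_nonempty
    refine ⟨B.coord i, fun h => by simpa using LinearMap.congr_fun h (B i), fun x hx => ?_⟩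
    have hx' : x ∈ span ℤ (Set.range B) := by
      rw [Module.Basis.ofZLatticeBasis_span]
      exact hx
    obtain ⟨z, hz⟩ := (B.mem_span_iff_repr_mem ℤ x).1 hx' i
    exact ⟨z, hz.symm⟩
  · obtain ⟨f, hf0, hfL⟩ := (span ℝ (L : Set E)).exists_le_ker_of_lt_top (lt_top_iff_ne_top.2 hspan)
    exact ⟨f, hf0, fun x hx => ⟨0, by simpa using hfL (subset_span hx)⟩⟩

theorem exists_ne_zero_intValued_of_isClosed_of_ne_top [FiniteDimensional ℝ E]
    (hH : IsClosed (H : Set E)) (hH_top : H ≠ ⊤) :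
    ∃ f : E →ₗ[ℝ] ℝ, f ≠ 0 ∧ (∀ x ∈ H, ∃ z : ℤ, f x = z) ∧ H.linealitySpace ≤ LinearMap.ker f := by
  set W := H.linealitySpace
  obtain ⟨U, hWU⟩ := W.exists_isCompl
  set π := U.projectionOnto W hWU.symm
  have hπH : ∀ x ∈ H, (π x : E) ∈ H := fun x hx => by
    simpa [π] using H.sub_mem hx (mem_of_mem_linealitySpace (sub_projection_mem hWU.symm x))
  set L := H.comap U.subtype.toAddMonoidHom
  have hL_closed : IsClosed (L : Set U) := hH.preimage continuous_subtype_val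
  have hL_lineality : L.linealitySpace = ⊥ := by
    refine (Submodule.eq_bot_iff _).2 fun u hu => ?_
    have huW : (u : E) ∈ W := fun t => hu t
    simpa using hWU.disjoint.le_bot ⟨huW, u.2⟩
  have : DiscreteTopology L := discreteTopology_of_linealitySpace_eq_bot hL_closed hL_lineality
  have : Nontrivial U := by
    refine Submodule.nontrivial_iff_ne_bot.2 fun hU => hH_top (eq_top_iff.2 fun x _ => ?_)
    have hW_top : W = ⊤ := eq_top_of_isCompl_bot (hU ▸ hWU)
    exact mem_of_mem_linealitySpace (show x ∈ W from hW_top ▸ Submodule.mem_top)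
  obtain ⟨g, hg0, hgL⟩ := exists_ne_zero_intValued_of_discreteTopology L
  refine ⟨g ∘ₗ π, fun h => hg0 ?_, fun x hx => hgL (π x) (hπH x hx), fun w hw => ?_⟩
  · ext u
    simpa [π] using LinearMap.congr_fun h u
  · simp [π, projectionOnto_apply_of_mem_right hWU.symm hw]

end AddSubgroup

section Torus

variable (ι : Type*)

def torusProj : (ι → ℝ) →+ (ι → AddCircle (1 : ℝ)) :=
  (QuotientAddGroup.mk' (AddSubgroup.zmultiples (1 : ℝ))).compLeft ι

variable {ι}

@[simp]
theorem torusProj_apply (v : ι → ℝ) (i : ι) : torusProj ι v i = (v i : AddCircle (1 : ℝ)) := rfl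

theorem continuous_torusProj : Continuous (torusProj ι) :=
  continuous_pi fun i => (AddCircle.continuous_mk' 1).comp (continuous_apply i)

theorem torusProj_surjective : Function.Surjective (torusProj ι) :=
  (QuotientAddGroup.mk'_surjective _).comp_left

theorem torusProj_single [DecidableEq ι] (i : ι) : torusProj ι (Pi.single i 1) = 0 := by
  ext j
  obtain rfl | hij := eq_or_ne j i
  · simp [AddCircle.coe_period]
  · simp [hij]

theorem dense_image_torusProj_of_forall_dotProduct_eq_zero [Fintype ι]
    (V : Submodule ℝ (ι → ℝ))
    (hV : ∀ z : ι → ℤ, (∀ v ∈ V, ((↑) ∘ z : ι → ℝ) ⬝ᵥ v = 0) → z = 0) :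
    Dense (torusProj ι '' V) := by
  classical
  set H := ((V.toAddSubgroup.map (torusProj ι)).topologicalClosure).comap (torusProj ι)
  have hH_closed : IsClosed (H : Set (ι → ℝ)) := isClosed_closure.preimage continuous_torusProj
  by_contra hnd
  have hH_top : H ≠ ⊤ := by
    refine fun h => hnd (dense_iff_closure_eq.2 (Set.eq_univ_of_forall fun y => ?_))
    obtain ⟨x, rfl⟩ := torusProj_surjective y
    exact (h ▸ AddSubgroup.mem_top x : x ∈ H)
  obtain ⟨f, hf0, hfZ, hfW⟩ := H.exists_ne_zero_intValued_of_isClosed_of_ne_top hH_closed hH_top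
  choose z hz using fun i => hfZ (Pi.single i 1) (by simp [H, torusProj_single])
  have hf : ∀ v, f v = ((↑) ∘ z : ι → ℝ) ⬝ᵥ v := fun v => by
    conv_lhs => rw [← Finset.univ_sum_single v]
    refine (map_sum f _ _).trans (Finset.sum_congr rfl fun i _ => ?_)
    rw [Function.comp_apply, ← hz, mul_comm, ← smul_eq_mul, ← map_smul, ← Pi.single_smul',
      smul_eq_mul, mul_one]
  have hVW : V ≤ H.linealitySpace := fun v hv t =>
    subset_closure ⟨t • v, V.smul_mem t hv, rfl⟩
  have hz0 : z = 0 := hV z fun v hv => hf v ▸ hfW (hVW hv)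
  exact hf0 (LinearMap.ext fun v => by simp [hf, hz0])

end Torus

theorem Matrix.eq_zero_of_mulVec_intCast_eq_zero {m n : Type*} [Fintype n]
    (A : Matrix m n ℝ) (hA : LinearIndependent ℚ fun j i => A i j) (z : n → ℤ)
    (hz : A *ᵥ ((↑) ∘ z) = 0) : z = 0 := by
  refine funext (Fintype.linearIndependent_iff.1 (hA.restrict_scalars' ℤ) z ?_)
  ext i
  simpa [mulVec, dotProduct, mul_comm] using congr_fun hz i

theorem slice_dense_in_torus_general
    (d n : ℕ)
    (P : Matrix (Fin d) (Fin n) ℝ)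
    (hcols : LinearIndependent ℚ (fun j : Fin n => fun i : Fin d => P i j)) :
    DenseRange (fun x : Fin d → ℝ =>
      fun i : Fin n => ((P.transpose.mulVec x i : ℝ) : AddCircle (1 : ℝ))) := by
  have hV : ∀ z : Fin n → ℤ,
      (∀ v ∈ LinearMap.range Pᵀ.mulVecLin, ((↑) ∘ z : Fin n → ℝ) ⬝ᵥ v = 0) → z = 0 := by
    refine fun z hz => P.eq_zero_of_mulVec_intCast_eq_zero hcols z (funext fun i => ?_)
    have := hz _ ⟨Pi.single i 1, rfl⟩
    rwa [mulVecLin_apply, dotProduct_mulVec, vecMul_transpose,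
      dotProduct_single, mul_one] at this
  have := dense_image_torusProj_of_forall_dotProduct_eq_zero _ hV
  rwa [LinearMap.coe_range, ← Set.range_comp] at this

/-- **Theorem 3.1.** For a projection matrix `P ∈ ℝ^{d×n}` (full real rank `d`,
columns ℚ-linearly independent), the image of the irrational slice
`{Pᵀ x : x ∈ ℝ^d}` under the modulo map is dense in the torus `𝕋^n`. -/
theorem slice_dense_in_torus
    (d n : ℕ) (hd : 0 < d) (hn : 0 < n) (hdn : d ≤ n)
    (P : Matrix (Fin d) (Fin n) ℝ)
    (hrank : P.rank = d)
    (hcols : LinearIndependent ℚ (fun j : Fin n => fun i : Fin d => P i j)) :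
    DenseRange (fun x : Fin d → ℝ =>
      fun i : Fin n => ((P.transpose.mulVec x i : ℝ) : AddCircle (1 : ℝ))) :=
  slice_dense_in_torus_general d n P hcols
end

section
/- Let k and d be positive integers and let A be a k×d real matrix such that the k+d vectors consisting of the standard basis vectors e₁,…,e_d of ℝ^d together with the k rows of A are linearly independent over ℚ. Then the set {A t mod ℤ^k : t ∈ ℤ^d} is dense in the torus 𝕋^k. -/
/-!
Weyl's criterion. Average a continuous function over the points `A t mod ℤ^k` with `t` in the
box `{0, …, N-1}^d`. For the character `χ_m(x) = exp(2πi ⟨m, x⟩)` the average factors into the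
geometric means `𝔼_{s<N} z_j^s` with `z_j = χ_m(j-th column of A)`, which tend to `0` unless
`z_j = 1`. All `z_j` equal `1` exactly when `mᵀA` is an integer vector, which ℚ-independence of
`e₁, …, e_d` and the rows of `A` forbids unless `m = 0`. So the averages of every character, hence
(by uniform boundedness and density of trigonometric polynomials) of every continuous function,
tend to its Haar integral. A bump function vanishing on the closure of the image but not
everywhere has positive integral, so the image is dense.
-/

open Filter Finset MeasureTheory Topology
open scoped BigOperators

theorem Finset.prod_univ_expect {ι K : Type*} {κ : ι → Type*} [Fintype ι] [DecidableEq ι]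
    [Semifield K] [CharZero K] (t : ∀ i, Finset (κ i)) (f : ∀ i, κ i → K) :
    ∏ i, 𝔼 j ∈ t i, f i j = 𝔼 x ∈ Fintype.piFinset t, ∏ i, f i (x i) := by
  simp only [expect_eq_sum_div_card, prod_div_distrib, prod_univ_sum, Fintype.card_piFinset,
    Nat.cast_prod]

theorem Complex.tendsto_expect_range_pow {z : ℂ} (hz : ‖z‖ = 1) :
    Tendsto (fun N => 𝔼 n ∈ range N, z ^ n) atTop (𝓝 (if z = 1 then 1 else 0)) := by
  split_ifs with hz1
  · subst hz1
    refine tendsto_const_nhds.congr' ?_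
    filter_upwards [eventually_ge_atTop 1] with N hN
    simp [expect_const (nonempty_range_iff.2 (by omega : N ≠ 0))]
  · have hbound (N : ℕ) : ‖𝔼 n ∈ range N, z ^ n‖ ≤ 2 / ‖z - 1‖ / N := by
      rw [expect_eq_sum_div_card, geom_sum_eq hz1, card_range, norm_div, norm_div,
        Complex.norm_natCast]
      gcongr
      calc ‖z ^ N - 1‖ ≤ ‖z ^ N‖ + ‖(1 : ℂ)‖ := norm_sub_le _ _
        _ = 2 := by rw [norm_pow, hz]; norm_num
    rw [tendsto_zero_iff_norm_tendsto_zero]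
    exact squeeze_zero (fun _ => norm_nonneg _) hbound
      (tendsto_const_nhds.div_atTop tendsto_natCast_atTop_atTop)

theorem AddCircle.toCircle_sum {T : ℝ} {ι : Type*} (s : Finset ι) (x : ι → AddCircle T) :
    toCircle (∑ i ∈ s, x i) = ∏ i ∈ s, toCircle (x i) := by
  classical
  induction s using Finset.induction_on with
  | empty => simp [toCircle_zero]
  | insert i s hi ih => rw [sum_insert hi, prod_insert hi, toCircle_add, ih]

@[simp, norm_cast]
theorem Circle.coe_prod {ι : Type*} (s : Finset ι) (f : ι → Circle) :
    ((∏ i ∈ s, f i : Circle) : ℂ) = ∏ i ∈ s, (f i : ℂ) :=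
  map_prod Circle.coeHom f s

theorem eq_zero_of_forall_sum_mul_eq_intCast {ι κ : Type*} [Fintype ι] [Fintype κ]
    [DecidableEq ι] {A : Matrix κ ι ℝ}
    (hA : LinearIndependent ℚ (Sum.elim (fun j : ι => (Pi.single j 1 : ι → ℝ)) fun i j => A i j))
    {n : κ → ℤ} {z : ι → ℤ} (h : ∀ j, ∑ i, (n i : ℝ) * A i j = z j) : n = 0 := by
  have hcomb : ∑ s, Sum.elim (fun j => (z j : ℚ)) (fun i => -(n i : ℚ)) s •
      Sum.elim (fun j : ι => (Pi.single j 1 : ι → ℝ)) (fun i j => A i j) s = 0 := by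
    ext j
    simp [Fintype.sum_sum_type, Pi.single_apply, ← h j, Rat.smul_def]
  funext i
  simpa using Fintype.linearIndependent_iff.1 hA _ hcomb (Sum.inr i)

section Equidistribution

variable {X α ι : Type*} [TopologicalSpace X] [CompactSpace X] (φ : α → X)

theorem lipschitzWith_one_expect_comp (t : Finset α) :
    LipschitzWith 1 fun g : C(X, ℂ) => 𝔼 a ∈ t, g (φ a) := by
  refine .of_dist_le_mul fun g h => ?_
  rw [dist_eq_norm, ← expect_sub_distrib, NNReal.coe_one, one_mul, dist_eq_norm]
  rcases t.eq_empty_or_nonempty with rfl | ht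
  · simp
  exact (RCLike.norm_expect_le (K := ℝ)).trans <|
    expect_le ht fun a _ => (g - h).norm_coe_le_norm (φ a)

variable [MeasurableSpace X] [OpensMeasurableSpace X] (μ : Measure X) [IsProbabilityMeasure μ]
  (l : Filter ι) (s : ι → Finset α)

theorem ContinuousMap.integrable_of_compactSpace (g : C(X, ℂ)) : Integrable g μ :=
  g.continuous.integrable_of_hasCompactSupport (.of_compactSpace _)

theorem lipschitzWith_one_integral : LipschitzWith 1 fun g : C(X, ℂ) => ∫ x, g x ∂μ := by
  refine .of_dist_le_mul fun g h => ?_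
  rw [dist_eq_norm,
    ← integral_sub (g.integrable_of_compactSpace μ) (h.integrable_of_compactSpace μ)]
  simpa [dist_eq_norm] using norm_integral_le_of_norm_le_const (μ := μ)
    (.of_forall fun x => (g - h).norm_coe_le_norm x)

def equidistributedSubmodule : Submodule ℂ C(X, ℂ) where
  carrier := {g | Tendsto (fun i => 𝔼 a ∈ s i, g (φ a)) l (𝓝 (∫ x, g x ∂μ))}
  zero_mem' := by simpa using tendsto_const_nhds
  add_mem' {g h} hg hh := by
    simpa [expect_add_distrib, integral_add (g.integrable_of_compactSpace μ)
      (h.integrable_of_compactSpace μ)] using hg.add hh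
  smul_mem' c g hg := by
    simpa [mul_expect, integral_const_mul] using hg.const_smul c

theorem isClosed_equidistributedSubmodule :
    IsClosed (equidistributedSubmodule φ μ l s : Set C(X, ℂ)) :=
  Equicontinuous.isClosed_setOfPred_tendsto
    (LipschitzWith.uniformEquicontinuous _ 1 fun i =>
      lipschitzWith_one_expect_comp φ (s i)).equicontinuous
    (lipschitzWith_one_integral μ).continuous

theorem tendsto_expect_integral_of_closure_span_eq_top {S : Set C(X, ℂ)}
    (hS : (Submodule.span ℂ S).topologicalClosure = ⊤)
    (h : ∀ g ∈ S, Tendsto (fun i => 𝔼 a ∈ s i, g (φ a)) l (𝓝 (∫ x, g x ∂μ))) (g : C(X, ℂ)) :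
    Tendsto (fun i => 𝔼 a ∈ s i, g (φ a)) l (𝓝 (∫ x, g x ∂μ)) := by
  have : (⊤ : Submodule ℂ C(X, ℂ)) ≤ equidistributedSubmodule φ μ l s :=
    hS ▸ Submodule.topologicalClosure_minimal _ (Submodule.span_le.2 h)
      (isClosed_equidistributedSubmodule φ μ l s)
  exact this Submodule.mem_top

theorem denseRange_of_tendsto_expect_integral [T2Space X] [μ.IsOpenPosMeasure] [l.NeBot]
    (h : ∀ g : C(X, ℂ), Tendsto (fun i => 𝔼 a ∈ s i, g (φ a)) l (𝓝 (∫ x, g x ∂μ))) :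
    DenseRange φ := by
  by_contra hφ
  obtain ⟨x₀, hx₀⟩ : ∃ x₀, x₀ ∉ closure (Set.range φ) := by
    simpa [DenseRange, Dense] using hφ
  obtain ⟨f, hf0, hf1, hf01⟩ := exists_continuous_zero_one_of_isClosed isClosed_closure
    isClosed_singleton (Set.disjoint_singleton_right.2 hx₀)
  have hpos : 0 < ∫ x, f x ∂μ :=
    f.continuous.integral_pos_of_hasCompactSupport_nonneg_nonzero (.of_compactSpace _)
      (fun x => (hf01 x).1) (x := x₀) (by simp [hf1 rfl])
  have hzero : ∫ x, (f x : ℂ) ∂μ = 0 := by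
    refine tendsto_nhds_unique (h ((ContinuousMap.mk _ Complex.continuous_ofReal).comp f)) ?_
    simp [hf0 (subset_closure (Set.mem_range_self _))]
  rw [integral_complex_ofReal, Complex.ofReal_eq_zero] at hzero
  exact hpos.ne' hzero

end Equidistribution

namespace UnitAddTorus

variable {ι : Type*} [Fintype ι]

theorem mFourier_apply_eq_toCircle (n : ι → ℤ) (x : UnitAddTorus ι) :
    mFourier n x = AddCircle.toCircle (∑ i, n i • x i) := by
  simp [mFourier, fourier_apply, AddCircle.toCircle_sum]

theorem norm_mFourier_apply (n : ι → ℤ) (x : UnitAddTorus ι) : ‖mFourier n x‖ = 1 := by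
  rw [mFourier_apply_eq_toCircle, Circle.norm_coe]

theorem mFourier_coe_eq_one_iff {n : ι → ℤ} {y : ι → ℝ} :
    mFourier n (fun i => (y i : UnitAddCircle)) = 1 ↔ ∃ z : ℤ, ∑ i, n i * y i = z := by
  have hsum : ∑ i, n i • (y i : UnitAddCircle) = ((∑ i, n i * y i : ℝ) : UnitAddCircle) := by
    simp
  rw [mFourier_apply_eq_toCircle, Circle.coe_eq_one, ← AddCircle.toCircle_zero,
    (AddCircle.injective_toCircle one_ne_zero).eq_iff, hsum, AddCircle.coe_eq_zero_iff]
  simp [eq_comm]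

theorem mFourier_sum_nsmul {κ : Type*} [Fintype κ] (n : ι → ℤ) (a : κ → UnitAddTorus ι)
    (t : κ → ℕ) : mFourier n (∑ j, t j • a j) = ∏ j, mFourier n (a j) ^ t j := by
  simp only [mFourier_apply_eq_toCircle, Finset.sum_apply, Pi.smul_apply, smul_sum]
  rw [sum_comm]
  simp only [smul_comm (n _) (t _), ← smul_sum, AddCircle.toCircle_sum, AddCircle.toCircle_nsmul,
    Circle.coe_prod, Circle.coe_pow]

theorem integral_mFourier (n : ι → ℤ) :
    ∫ x, mFourier n x ∂(Measure.pi fun _ => AddCircle.haarAddCircle) =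
      if n = 0 then 1 else 0 := by
  have hcircle (m : ℤ) : ∫ x : UnitAddCircle, fourier m x ∂AddCircle.haarAddCircle =
      if m = 0 then 1 else 0 := by
    simpa [fourierCoeff, Pi.single_apply, eq_comm] using
      congrFun (fourierCoeff_fourier (T := (1 : ℝ)) m) 0
  simp only [mFourier, ContinuousMap.coe_mk]
  rw [integral_fintype_prod_eq_prod (fun i x => fourier (n i) x)]
  simp only [hcircle, prod_ite_zero, prod_const_one, mem_univ, true_imp_iff, funext_iff, Pi.zero_apply]

theorem denseRange_sum_nsmul {κ : Type*} [Fintype κ] {a : κ → UnitAddTorus ι}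
    (ha : ∀ n : ι → ℤ, (∀ j, mFourier n (a j) = 1) → n = 0) :
    DenseRange fun t : κ → ℕ => ∑ j, t j • a j := by
  classical
  refine denseRange_of_tendsto_expect_integral _ (Measure.pi fun _ => AddCircle.haarAddCircle)
    atTop (fun N => Fintype.piFinset fun _ => range N) <|
    tendsto_expect_integral_of_closure_span_eq_top _ _ _ _ span_mFourier_closure_eq_top ?_
  rintro _ ⟨n, rfl⟩
  have hlim : Tendsto (fun N => ∏ j, 𝔼 s ∈ range N, mFourier n (a j) ^ s) atTop
      (𝓝 (∏ j, if mFourier n (a j) = 1 then 1 else 0)) :=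
    tendsto_finsetProd _ fun j _ => Complex.tendsto_expect_range_pow (norm_mFourier_apply n (a j))
  have hn : (∀ j, mFourier n (a j) = 1) ↔ n = 0 :=
    ⟨ha n, by rintro rfl j; simp [mFourier_zero]⟩
  simpa [integral_mFourier, prod_ite_zero, hn, mFourier_sum_nsmul, prod_univ_expect] using hlim

end UnitAddTorus

open UnitAddTorus in
theorem integer_image_dense_in_torus_general
    (k d : ℕ)
    (A : Matrix (Fin k) (Fin d) ℝ)
    (hindep : LinearIndependent ℚ
      (Sum.elim (fun i : Fin d => (Pi.single i 1 : Fin d → ℝ))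
        (fun j : Fin k => fun i : Fin d => A j i))) :
    DenseRange (fun t : Fin d → ℤ =>
      fun i : Fin k => ((A.mulVec (fun j => (t j : ℝ)) i : ℝ) : AddCircle (1 : ℝ))) := by
  set a : Fin d → UnitAddTorus (Fin k) := fun j i => (A i j : UnitAddCircle)
  have hchar (n : Fin k → ℤ) (hn : ∀ j, mFourier n (a j) = 1) : n = 0 := by
    choose z hz using fun j => mFourier_coe_eq_one_iff.1 (hn j)
    exact eq_zero_of_forall_sum_mul_eq_intCast hindep hz
  refine Dense.mono ?_ (denseRange_sum_nsmul hchar)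
  rintro _ ⟨t, rfl⟩
  refine ⟨fun j => t j, funext fun i => ?_⟩
  simp [a, Matrix.mulVec, dotProduct, mul_comm _ ((_ : ℕ) : ℝ), ← nsmul_eq_mul]

/-- Core density statement inside the proof of Theorem 3.1: if the standard
basis vectors `e₁,…,e_d` of `ℝ^d` together with the `k` rows of `A ∈ ℝ^{k×d}`
are ℚ-linearly independent, then `{A t mod ℤ^k : t ∈ ℤ^d}` is dense in `𝕋^k`. -/
theorem integer_image_dense_in_torus
    (k d : ℕ) (hk : 0 < k) (hd : 0 < d)
    (A : Matrix (Fin k) (Fin d) ℝ)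
    (hindep : LinearIndependent ℚ
      (Sum.elim (fun i : Fin d => (Pi.single i 1 : Fin d → ℝ))
        (fun j : Fin k => fun i : Fin d => A j i))) :
    DenseRange (fun t : Fin d → ℤ =>
      fun i : Fin k => ((A.mulVec (fun j => (t j : ℝ)) i : ℝ) : AddCircle (1 : ℝ))) :=
  integer_image_dense_in_torus_general k d A hindep
end

section
/- Let k and d be positive integers, n = d + k, and let A be any k×d real matrix. Then the set {(t, A t) mod ℤ^n : t ∈ ℝ^d} is dense in the torus 𝕋^n if and only if the set {A t mod ℤ^k : t ∈ ℤ^d} is dense in the torus 𝕋^k. -/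
/-!
Write `π : ℝ^d → 𝕋^d` for the projection. The map `Ψ (v, y) = (π v, y + A v mod ℤ^k)` from
`ℝ^d × 𝕋^k` onto `𝕋^d × 𝕋^k` is an open quotient map (a shear followed by `π × id`), and the
preimage of the slice's image under `Ψ` is `ℝ^d × {A m mod ℤ^k : m ∈ ℤ^d}`. Density is preserved
in both directions by preimages under open quotient maps.
-/

open Set

section

variable {G Q T : Type*} [TopologicalSpace G] [AddGroup T] [TopologicalSpace T]
  [IsTopologicalAddGroup T]

def Homeomorph.shearAdd (f : G → T) (hf : Continuous f) : G × T ≃ₜ G × T where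
  toFun p := (p.1, p.2 + f p.1)
  invFun p := (p.1, p.2 - f p.1)
  left_inv p := by simp
  right_inv p := by simp
  continuous_toFun := by fun_prop
  continuous_invFun := by fun_prop

variable [AddGroup G] [AddGroup Q] [TopologicalSpace Q]

theorem denseRange_prod_iff_dense_map_ker (π : G →+ Q) (hπ : IsOpenQuotientMap π) (φ : G →+ T)
    (hφ : Continuous φ) :
    DenseRange (fun v => (π v, φ v)) ↔ Dense (π.ker.map φ : Set T) := by
  set Ψ := Prod.map π id ∘ Homeomorph.shearAdd φ hφ
  have hΨ : IsOpenQuotientMap Ψ := (hπ.prodMap .id).comp (Homeomorph.isOpenQuotientMap _)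
  have hpre : Ψ ⁻¹' range (fun v => (π v, φ v)) = Prod.snd ⁻¹' (π.ker.map φ) := by
    ext ⟨v, y⟩
    simp only [Ψ, Homeomorph.shearAdd, mem_preimage, mem_range, Function.comp_apply,
      Homeomorph.homeomorph_mk_coe, Equiv.coe_fn_mk, Prod.map, id, Prod.mk.injEq,
      SetLike.mem_coe, AddSubgroup.mem_map, AddMonoidHom.mem_ker]
    constructor
    · rintro ⟨w, hπw, hφw⟩
      exact ⟨w - v, by simp [hπw], by simp [hφw]⟩
    · rintro ⟨u, hπu, rfl⟩
      exact ⟨u + v, by simp [hπu], by simp⟩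
  rw [DenseRange, ← hΨ.dense_preimage_iff, hpre, isOpenQuotientMap_snd.dense_preimage_iff]

end

theorem coe_ker_compLeft_mk_zmultiples_one (ι : Type*) :
    ((AddMonoidHom.compLeft (QuotientAddGroup.mk' (AddSubgroup.zmultiples (1 : ℝ))) ι).ker :
      Set (ι → ℝ)) = range fun m : ι → ℤ => fun i => (m i : ℝ) := by
  ext t
  simp only [SetLike.mem_coe, AddMonoidHom.mem_ker, funext_iff, AddMonoidHom.compLeft_apply,
    Function.comp_apply, QuotientAddGroup.mk'_apply, Pi.zero_apply, QuotientAddGroup.eq_zero_iff,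
    AddSubgroup.mem_zmultiples_iff, zsmul_one, mem_range]
  exact Classical.skolem

theorem slice_dense_iff_integer_image_dense_general
    (k d : ℕ)
    (A : Matrix (Fin k) (Fin d) ℝ) :
    DenseRange (fun t : Fin d → ℝ =>
      ((fun i : Fin d => ((t i : ℝ) : AddCircle (1 : ℝ))),
       (fun i : Fin k => ((A.mulVec t i : ℝ) : AddCircle (1 : ℝ))))) ↔
    DenseRange (fun t : Fin d → ℤ =>
      fun i : Fin k => ((A.mulVec (fun j => (t j : ℝ)) i : ℝ) : AddCircle (1 : ℝ))) := by
  let π (ι : Type) :=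
    AddMonoidHom.compLeft (QuotientAddGroup.mk' (AddSubgroup.zmultiples (1 : ℝ))) ι
  have hπ (ι : Type) : IsOpenQuotientMap (π ι) :=
    .piMap fun _ => QuotientAddGroup.isOpenQuotientMap_mk
  have hφ : Continuous ((π (Fin k)).comp A.mulVecLin.toAddMonoidHom) :=
    (hπ _).continuous.comp (Continuous.matrix_mulVec continuous_const continuous_id)
  have key := denseRange_prod_iff_dense_map_ker (π (Fin d)) (hπ _) _ hφ
  rwa [AddSubgroup.coe_map, coe_ker_compLeft_mk_zmultiples_one, ← Set.range_comp] at key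

/-- The equivalence from the first part of the proof of Theorem 3.1: the image
of the slice `S = {(t, At) : t ∈ ℝ^d}` under the modulo map is dense in
`𝕋^n = 𝕋^d × 𝕋^k` if and only if `{At mod ℤ^k : t ∈ ℤ^d}` is dense in `𝕋^k`. -/
theorem slice_dense_iff_integer_image_dense
    (k d : ℕ) (hk : 0 < k) (hd : 0 < d)
    (A : Matrix (Fin k) (Fin d) ℝ) :
    DenseRange (fun t : Fin d → ℝ =>
      ((fun i : Fin d => ((t i : ℝ) : AddCircle (1 : ℝ))),
       (fun i : Fin k => ((A.mulVec t i : ℝ) : AddCircle (1 : ℝ))))) ↔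
    DenseRange (fun t : Fin d → ℤ =>
      fun i : Fin k => ((A.mulVec (fun j => (t j : ℝ)) i : ℝ) : AddCircle (1 : ℝ))) :=
  slice_dense_iff_integer_image_dense_general k d A
end

section
/- Let k ≥ 2 and k' ≥ 1 be integers and let a₁,…,a_{k'} ∈ ℝ^k be vectors such that the k + k' vectors e₁,…,e_k, a₁,…,a_{k'} are linearly independent over ℚ, where e₁,…,e_k is the standard basis of ℝ^k. Let J ⊆ {1,…,k'} be the set of indices i for which the k-th coordinate of aᵢ is a rational number, and for i ∈ J let aᵢ' ∈ ℝ^{k−1} be the vector of the first k−1 coordinates of aᵢ. Then the vectors e₁,…,e_{k−1} ∈ ℝ^{k−1} together with the vectors aᵢ' for i ∈ J are linearly independent over ℚ. -/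
/-!
A ℚ-relation among `e₁, …, e_{k-1}` and the truncated `aᵢ` (`i ∈ J`) lifts to a vector of
`ℝ^k` in the ℚ-span of `e₁, …, e_k` and the `aᵢ` (`i ∈ J`) whose first `k - 1` coordinates
vanish. Its last coordinate is rational, because the last coordinates of these `aᵢ` are, so the
vector is a rational multiple of `e_k`; since `e_k` is not among the lifted vectors, the
ℚ-independence of `e₁, …, e_k, a₁, …, a_{k'}` forces the relation to be trivial.
-/

open Function Submodule

theorem LinearIndependent.map_comp_of_ker_inf_span_le {R M N ι κ : Type*} [Ring R]
    [AddCommGroup M] [Module R M] [AddCommGroup N] [Module R N]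
    {v : ι → M} (hv : LinearIndependent R v) {f : M →ₗ[R] N} {s : Set ι}
    (hf : LinearMap.ker f ⊓ span R (Set.range v) ≤ span R (v '' s))
    {g : κ → ι} (hg : Injective g) (hgs : ∀ j, g j ∉ s) :
    LinearIndependent R (f ∘ v ∘ g) := by
  refine (hv.comp g hg).map (disjoint_iff_inf_le.2 ?_)
  rintro x ⟨hxg, hxf⟩
  rw [Set.range_comp] at hxg
  have hdisj : Disjoint (span R (v '' Set.range g)) (span R (v '' s)) :=
    hv.disjoint_span_image (Set.disjoint_left.2 (by rintro _ ⟨j, rfl⟩; exact hgs j))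
  exact hdisj.le_bot ⟨hxg, hf ⟨hxf, span_mono (Set.image_subset_range _ _) hxg⟩⟩

theorem exists_ratCast_eq_apply_of_mem_span {ι κ : Type*} {v : κ → ι → ℝ} {i : ι}
    (hv : ∀ j, ∃ q : ℚ, v j i = q) {x : ι → ℝ} (hx : x ∈ span ℚ (Set.range v)) :
    ∃ q : ℚ, x i = q := by
  induction hx using span_induction with
  | mem _ hy => obtain ⟨j, rfl⟩ := hy; exact hv j
  | zero => exact ⟨0, by simp⟩
  | add _ _ _ _ hy hz =>
    obtain ⟨q, hq⟩ := hy
    obtain ⟨r, hr⟩ := hz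
    exact ⟨q + r, by simp [hq, hr]⟩
  | smul c _ _ hy =>
    obtain ⟨q, hq⟩ := hy
    exact ⟨c * q, by simp [hq, Rat.smul_def]⟩

theorem mem_span_single_of_apply_castLE_eq_zero {k : ℕ} {x : Fin k → ℝ}
    (hx : ∀ j : Fin (k - 1), x (Fin.castLE (Nat.sub_le k 1) j) = 0)
    {l : Fin k} (hl : (l : ℕ) = k - 1) {q : ℚ} (hq : x l = q) :
    x ∈ span ℚ {Pi.single l 1} := by
  refine mem_span_singleton.2 ⟨q, funext fun j => ?_⟩
  rcases eq_or_ne j l with rfl | hjl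
  · simp [hq, Rat.smul_def]
  · have hj : (j : ℕ) < k - 1 := by have := Fin.val_ne_of_ne hjl; omega
    simpa [hjl] using (hx ⟨j, hj⟩).symm

/-- Linear-algebra claim from Cases 1 and 2 of the inductive proof of
Theorem 3.1: if `e₁,…,e_k, a₁,…,a_{k'}` are ℚ-linearly independent in `ℝ^k`,
and `J` is the set of indices `i` whose `k`-th coordinate `aᵢ(k)` is rational,
then the standard basis of `ℝ^{k-1}` together with the truncations (first
`k-1` coordinates) of the `aᵢ`, `i ∈ J`, are ℚ-linearly independent. -/
theorem truncated_rows_linearIndependent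
    (k k' : ℕ) (hk : 2 ≤ k)
    (a : Fin k' → (Fin k → ℝ))
    (hindep : LinearIndependent ℚ
      (Sum.elim (fun i : Fin k => (Pi.single i 1 : Fin k → ℝ)) a)) :
    LinearIndependent ℚ
      (Sum.elim (fun j : Fin (k - 1) => (Pi.single j 1 : Fin (k - 1) → ℝ))
        (fun i : {i : Fin k' // ∃ q : ℚ, a i ⟨k - 1, by omega⟩ = (q : ℝ)} =>
          fun j : Fin (k - 1) => a i (Fin.castLE (Nat.sub_le k 1) j))) := by
  set l : Fin k := ⟨k - 1, by omega⟩
  set J := {i : Fin k' // ∃ q : ℚ, a i l = q}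
  set v : Fin k ⊕ J → Fin k → ℝ := Sum.elim (fun i => Pi.single i 1) (fun i => a i)
  have hv : LinearIndependent ℚ v := by
    have := hindep.comp (Sum.map id (Subtype.val : J → Fin k'))
      (Sum.map_injective.2 ⟨injective_id, Subtype.val_injective⟩)
    rwa [Sum.elim_comp_map] at this
  have hv_rat : ∀ j, ∃ q : ℚ, v j l = q := by
    rintro (j | i)
    · exact ⟨if l = j then 1 else 0, by simp [v, Pi.single_apply, apply_ite]⟩
    · exact i.2
  set trunc : (Fin k → ℝ) →ₗ[ℚ] Fin (k - 1) → ℝ :=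
    (LinearMap.funLeft ℝ ℝ (Fin.castLE (Nat.sub_le k 1))).restrictScalars ℚ
  have hker : LinearMap.ker trunc ⊓ span ℚ (Set.range v) ≤ span ℚ (v '' {Sum.inl l}) := by
    rintro x ⟨hx0, hxv⟩
    obtain ⟨q, hq⟩ := exists_ratCast_eq_apply_of_mem_span hv_rat hxv
    rw [Set.image_singleton]
    exact mem_span_single_of_apply_castLE_eq_zero (fun j => congrFun hx0 j) rfl hq
  have hl : ∀ j, Sum.map (Fin.castLE (Nat.sub_le k 1)) id j ∉
      ({Sum.inl l} : Set (Fin k ⊕ J)) := by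
    rintro (j | i)
    · simp [Fin.ext_iff, l]; omega
    · simp
  have key := hv.map_comp_of_ker_inf_span_le hker
    (Sum.map_injective.2 ⟨Fin.castLE_injective _, injective_id⟩) hl
  have hfamily : trunc ∘ v ∘ Sum.map (Fin.castLE (Nat.sub_le k 1)) id =
      Sum.elim (fun j : Fin (k - 1) => (Pi.single j 1 : Fin (k - 1) → ℝ))
        (fun i : J => fun j => a i (Fin.castLE (Nat.sub_le k 1) j)) := by
    ext (j | i) x
    · simp [trunc, v, Pi.single_apply, Fin.castLE_inj]
    · rfl
  rwa [hfamily] at key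
end

section
/- Let k and d be positive integers, A a k×d real matrix, ε a real number with 0 < ε < 1/2, and T₁,…,T_d nonnegative integers. Suppose that for every point r₀ of the torus 𝕋^k there exists t ∈ ℤ^d with 0 ≤ tᵢ ≤ Tᵢ for every i such that the distance in 𝕋^k (the maximum over coordinates of the AddCircle distances) between the class of A t and r₀ is at most ε. Then ∏_{i=1}^d (Tᵢ + 1) ≥ (2ε)^{−k}. -/
/-!
The closed `ε`-balls around the points `A t`, `t` in the box `∏ᵢ [0, Tᵢ]`, cover the torus
`𝕋^k`, which has Haar measure `1`, while each of them has measure `(2ε)^k`. Subadditivity of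
the measure therefore forces the box to contain at least `(2ε)^{-k}` integer points.
-/

open MeasureTheory Metric
open scoped ENNReal

instance UnitAddCircle.isProbabilityMeasure_volume :
    IsProbabilityMeasure (volume : Measure UnitAddCircle) :=
  ⟨UnitAddCircle.measure_univ⟩

theorem one_le_card_mul_of_forall_exists_dist_le {X ι : Type*} [PseudoMetricSpace X]
    [MeasurableSpace X] (μ : Measure X) [IsProbabilityMeasure μ] (S : Finset ι) (c : ι → X)
    {ε : ℝ} {m : ℝ≥0∞} (hball : ∀ x, μ (closedBall x ε) ≤ m)
    (hcover : ∀ x, ∃ i ∈ S, dist (c i) x ≤ ε) :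
    1 ≤ S.card * m := by
  have hcov : (Set.univ : Set X) ⊆ ⋃ i ∈ S, closedBall (c i) ε := fun x _ => by
    obtain ⟨i, hi, hdist⟩ := hcover x
    exact Set.mem_biUnion hi (mem_closedBall'.mpr hdist)
  calc (1 : ℝ≥0∞) = μ Set.univ := measure_univ.symm
    _ ≤ μ (⋃ i ∈ S, closedBall (c i) ε) := measure_mono hcov
    _ ≤ ∑ i ∈ S, μ (closedBall (c i) ε) := measure_biUnion_finset_le S _
    _ ≤ ∑ _i ∈ S, m := Finset.sum_le_sum fun i _ => hball (c i)
    _ = S.card * m := by rw [Finset.sum_const, nsmul_eq_mul]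

theorem AddCircle.volume_closedBall_pi {ι : Type*} [Fintype ι] {p : ℝ} [Fact (0 < p)]
    (x : ι → AddCircle p) {ε : ℝ} (hε : 0 ≤ ε) :
    volume (closedBall x ε) = ENNReal.ofReal (min p (2 * ε)) ^ Fintype.card ι := by
  simp only [closedBall_pi _ hε, volume_pi_pi, AddCircle.volume_closedBall,
    Finset.prod_const, Finset.card_univ]

theorem Pi.card_Icc_zero_natCast {ι : Type*} [Fintype ι] [DecidableEq ι] (T : ι → ℕ) :
    (Finset.Icc 0 fun i => (T i : ℤ)).card = ∏ i, (T i + 1) := by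
  rw [Pi.card_Icc]
  refine Finset.prod_congr rfl fun i _ => ?_
  rw [Pi.zero_apply, Int.card_Icc, sub_zero]
  omega

theorem least_region_lower_bound_general
    (k d : ℕ)
    (A : Matrix (Fin k) (Fin d) ℝ)
    (ε : ℝ) (hε : 0 < ε) (hε' : ε < 1 / 2)
    (T : Fin d → ℕ)
    (hcover : ∀ r₀ : Fin k → AddCircle (1 : ℝ),
      ∃ t : Fin d → ℤ, (∀ i, 0 ≤ t i ∧ t i ≤ (T i : ℤ)) ∧
        dist (fun i : Fin k =>
          ((A.mulVec (fun j => (t j : ℝ)) i : ℝ) : AddCircle (1 : ℝ))) r₀ ≤ ε) :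
    ((2 * ε) ^ k)⁻¹ ≤ ∏ i : Fin d, ((T i : ℝ) + 1) := by
  have hball (x : Fin k → AddCircle (1 : ℝ)) :
      volume (closedBall x ε) ≤ ENNReal.ofReal ((2 * ε) ^ k) := by
    rw [AddCircle.volume_closedBall_pi x hε.le, min_eq_right (by linarith), Fintype.card_fin,
      ENNReal.ofReal_pow (by positivity)]
  have hbox : ∀ r₀, ∃ t ∈ Finset.Icc 0 fun i => (T i : ℤ), dist (fun i : Fin k =>
      ((A.mulVec (fun j => (t j : ℝ)) i : ℝ) : AddCircle (1 : ℝ))) r₀ ≤ ε := fun r₀ => by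
    obtain ⟨t, ht, hdist⟩ := hcover r₀
    exact ⟨t, Finset.mem_Icc.mpr ⟨fun i => (ht i).1, fun i => (ht i).2⟩, hdist⟩
  have hcount := one_le_card_mul_of_forall_exists_dist_le volume _ _ hball hbox
  rw [Pi.card_Icc_zero_natCast, ← ENNReal.ofReal_natCast, ← ENNReal.ofReal_mul (by positivity),
    ENNReal.one_le_ofReal] at hcount
  push_cast at hcount
  rwa [inv_le_iff_one_le_mul₀ (by positivity)]

/-- Quantitative content of Lemma 3.10: if for every `r₀ ∈ 𝕋^k` the Diophantine
system `‖At mod ℤ^k − r₀‖∞ ≤ ε` has a solution `t ∈ ℤ^d` with `0 ≤ tᵢ ≤ Tᵢ`,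
then `∏ᵢ (Tᵢ + 1) ≥ (2ε)^{-k}`. -/
theorem least_region_lower_bound
    (k d : ℕ) (hk : 0 < k) (hd : 0 < d)
    (A : Matrix (Fin k) (Fin d) ℝ)
    (ε : ℝ) (hε : 0 < ε) (hε' : ε < 1 / 2)
    (T : Fin d → ℕ)
    (hcover : ∀ r₀ : Fin k → AddCircle (1 : ℝ),
      ∃ t : Fin d → ℤ, (∀ i, 0 ≤ t i ∧ t i ≤ (T i : ℤ)) ∧
        dist (fun i : Fin k =>
          ((A.mulVec (fun j => (t j : ℝ)) i : ℝ) : AddCircle (1 : ℝ))) r₀ ≤ ε) :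
    ((2 * ε) ^ k)⁻¹ ≤ ∏ i : Fin d, ((T i : ℝ) + 1) :=
  least_region_lower_bound_general k d A ε hε hε' T hcover
end

section
/- Let k and d be positive integers, n = d + k, and let A be any k×d real matrix. Then the set {(t, A t) mod ℤ^n : t ∈ ℝ^d} equals all of the torus 𝕋^n if and only if the set {A t mod ℤ^k : t ∈ ℤ^d} equals all of the torus 𝕋^k. -/
/-!
The lifts of a point `x ∈ 𝕋^d` to `ℝ^d` form a coset `s + ℤ^d`, so the second coordinates
of the slice points lying over `x` are `A s + A ℤ^d mod ℤ^k`, a translate of the integer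
image. Hence the slice meets every fibre `{x} × 𝕋^k` fully iff the integer image is all of
`𝕋^k`.
-/

open Function

theorem AddMonoidHom.surjective_prod_iff_surjective_comp {G M P Q : Type*} [AddGroup G]
    [AddGroup P] [AddGroup Q] (p : G →+ P) (ψ : G →+ Q) (hp : Surjective p) (ι : M → G)
    (hι : Set.range ι = p.ker) :
    Surjective (fun g => (p g, ψ g)) ↔ Surjective fun m => ψ (ι m) := by
  have hpι (m : M) : p (ι m) = 0 := by
    simpa [hι] using Set.mem_range_self (f := ι) m
  constructor
  · intro h y
    obtain ⟨g, hg⟩ := h (0, y)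
    simp only [Prod.mk.injEq] at hg
    obtain ⟨m, rfl⟩ : g ∈ Set.range ι := hι ▸ hg.1
    exact ⟨m, hg.2⟩
  · rintro h ⟨x, y⟩
    obtain ⟨g, rfl⟩ := hp x
    obtain ⟨m, hm⟩ := h (-ψ g + y)
    refine ⟨g + ι m, ?_⟩
    simp only [map_add, hpι, add_zero, hm, add_neg_cancel_left]

noncomputable abbrev torusMk (ι : Type*) : (ι → ℝ) →+ (ι → AddCircle (1 : ℝ)) :=
  (QuotientAddGroup.mk' (AddSubgroup.zmultiples (1 : ℝ))).compLeft ι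

theorem torusMk_surjective (ι : Type*) : Surjective (torusMk ι) := fun x =>
  ⟨fun i => (x i).out, funext fun i => QuotientAddGroup.out_eq' (x i)⟩

theorem range_intCast_eq_ker_torusMk (ι : Type*) :
    Set.range (fun m : ι → ℤ => fun i => (m i : ℝ)) = (torusMk ι).ker := by
  ext t
  simp only [Set.mem_range, SetLike.mem_coe, AddMonoidHom.mem_ker, funext_iff,
    AddMonoidHom.compLeft_apply, QuotientAddGroup.coe_mk', comp_apply, Pi.zero_apply,
    QuotientAddGroup.eq_zero_iff, AddSubgroup.mem_zmultiples_iff, zsmul_one]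
  rw [Classical.skolem]

theorem slice_eq_torus_iff_integer_image_eq_torus_general
    (k d : ℕ)
    (A : Matrix (Fin k) (Fin d) ℝ) :
    (Set.range (fun t : Fin d → ℝ =>
        ((fun i : Fin d => ((t i : ℝ) : AddCircle (1 : ℝ))),
         (fun i : Fin k => ((A.mulVec t i : ℝ) : AddCircle (1 : ℝ))))) = Set.univ) ↔
    (Set.range (fun t : Fin d → ℤ =>
        fun i : Fin k =>
          ((A.mulVec (fun j => (t j : ℝ)) i : ℝ) : AddCircle (1 : ℝ))) = Set.univ) := by
  simp only [Set.range_eq_univ]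
  exact (torusMk (Fin d)).surjective_prod_iff_surjective_comp
    ((torusMk (Fin k)).comp A.mulVecLin.toAddMonoidHom) (torusMk_surjective _) _
    (range_intCast_eq_ker_torusMk _)

/-- The equivalence from the beginning of Section 3.3: the modulo image of the
slice `{(t, At) : t ∈ ℝ^d}` equals all of `𝕋^n = 𝕋^d × 𝕋^k` if and only if
`{At mod ℤ^k : t ∈ ℤ^d}` equals all of `𝕋^k`. -/
theorem slice_eq_torus_iff_integer_image_eq_torus
    (k d : ℕ) (hk : 0 < k) (hd : 0 < d)
    (A : Matrix (Fin k) (Fin d) ℝ) :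
    (Set.range (fun t : Fin d → ℝ =>
        ((fun i : Fin d => ((t i : ℝ) : AddCircle (1 : ℝ))),
         (fun i : Fin k => ((A.mulVec t i : ℝ) : AddCircle (1 : ℝ))))) = Set.univ) ↔
    (Set.range (fun t : Fin d → ℤ =>
        fun i : Fin k =>
          ((A.mulVec (fun j => (t j : ℝ)) i : ℝ) : AddCircle (1 : ℝ))) = Set.univ) :=
  slice_eq_torus_iff_integer_image_eq_torus_general k d A
end
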